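/- Let x₀ ∈ ℝ^m and let f : ℝ^m → ℝ be continuously differentiable. For a point x̂ write q = ∇f(x̂) and f(x̂) = p + f₀, and consider the iteration x̂ ↦ x_{new} = x₀ - (q/‖q‖²)(p - (x̂ - x₀)ᵀ q + f₀). A point x̂ with ∇f(x̂) ≠ 0 is a fixed point of this iteration if and only if f(x̂) = 0 and ∇f(x̂) is collinear with x̂ - x₀. -/

import Mathlib

open RealInnerProductSpace

/-- Fixed points of the projection-point update (Euclidean metric): with
`q = ∇f(xh)` nonzero, the point `xh` is a fixed point of
`x ↦ x₀ - ((f(x) - ⟨x - x₀, q⟩)/‖q‖²) q`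
if and only if `f(xh) = 0` and `∇f(xh)` is collinear with `xh - x₀`. -/
theorem stmt_4 (m : ℕ) (f : EuclideanSpace ℝ (Fin m) → ℝ)
    (hf : ContDiff ℝ 1 f)
    (x₀ xh : EuclideanSpace ℝ (Fin m))
    (q : EuclideanSpace ℝ (Fin m)) (hq : q = gradient f xh) (hq0 : q ≠ 0) :
    x₀ - ((f xh - ⟪xh - x₀, q⟫) / ‖q‖ ^ 2) • q = xh
      ↔ f xh = 0 ∧ ∃ lam : ℝ, xh - x₀ = lam • q := by
  have hn : (‖q‖ : ℝ) ^ 2 ≠ 0 := pow_ne_zero 2 (norm_ne_zero_iff.mpr hq0)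
  constructor
  · intro h
    set c : ℝ := (f xh - ⟪xh - x₀, q⟫) / ‖q‖ ^ 2 with hc
    have hdiff : xh - x₀ = (-c) • q := by
      have : xh - x₀ = x₀ - c • q - x₀ := by rw [h]
      simpa [sub_sub_cancel_left, neg_smul] using this
    have hip : ⟪xh - x₀, q⟫ = -c * ‖q‖ ^ 2 := by
      rw [hdiff, real_inner_smul_left, real_inner_self_eq_norm_sq]
    have hf0 : f xh = 0 := by
      have := hc
      rw [hip] at this
      field_simp at this
      linarith
    exact ⟨hf0, ⟨-c, hdiff⟩⟩
  · rintro ⟨hf0, lam, hlam⟩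
    have hip : ⟪xh - x₀, q⟫ = lam * ‖q‖ ^ 2 := by
      rw [hlam, real_inner_smul_left, real_inner_self_eq_norm_sq]
    rw [hf0, hip]
    have : (0 - lam * ‖q‖ ^ 2) / ‖q‖ ^ 2 = -lam := by field_simp; ring
    rw [this, neg_smul, sub_neg_eq_add]
    rw [eq_comm, ← sub_eq_iff_eq_add']
    exact hlam
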